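/- arXiv:1804.10471 — 3 statements merged into one kernel-verified Lean document; each statement's English description precedes it below -/
import Mathlib

section
/- Let Γ be a countable discrete group in which every conjugacy class of a non-identity element is infinite (Γ is i.c.c.). Consider the unitary conjugation representation π of Γ on ℓ²(Γ, ℂ) determined by (π(g) f)(h) = f(g⁻¹ h g). Then every finite-dimensional subspace V ⊆ ℓ²(Γ, ℂ) satisfying π(g) V = V for all g ∈ Γ is contained in the one-dimensional span of δ_e, the indicator function of the identity element. (In particular, the conjugation action of an i.c.c. group on its group von Neumann algebra is weakly mixing.) -/
/-!
If `f ∈ V` and `γ` has infinite conjugacy class, the conjugates `π(g) f` all lie in `V` and have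
norm `‖f‖`, so they stay in a compact ball of the finite-dimensional space `V`. Picking `g_k` with
`g_k γ g_k⁻¹` pairwise distinct, `π(g_k) f` takes the value `f γ` at `g_k γ g_k⁻¹`, a point escaping
to infinity; but on a compact subset of `ℓ²` the coordinates tend to `0` uniformly at infinity.
Hence `f γ = 0` for all `γ ≠ 1`, i.e. `f` is a multiple of `δ_e`.
-/

open scoped ENNReal

open Filter Topology

lemma Set.Infinite.exists_tendsto_cofinite_comp {α β : Type*} {f : β → α}
    (h : (Set.range f).Infinite) : ∃ g : ℕ → β, Tendsto (f ∘ g) atTop cofinite := by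
  choose g hg using fun k => (h.natEmbedding _ k).2
  refine ⟨g, ?_⟩
  have hinj : Function.Injective (f ∘ g) := fun a b hab =>
    (h.natEmbedding _).injective (Subtype.ext (by simpa only [Function.comp, hg] using hab))
  exact Nat.cofinite_eq_atTop ▸ hinj.tendsto_cofinite

namespace lp

variable {α : Type*} {E : α → Type*} [∀ i, NormedAddCommGroup (E i)] {p : ℝ≥0∞}

lemma tendsto_norm_apply_cofinite_zero (hp : 0 < p.toReal) (f : lp E p) :
    Tendsto (fun i => ‖f i‖) cofinite (𝓝 0) := by
  have hpow := ((lp.memℓp f).summable hp).tendsto_cofinite_zero.rpow_const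
    (p := p.toReal⁻¹) (Or.inr (inv_nonneg.mpr hp.le))
  rw [Real.zero_rpow (inv_ne_zero hp.ne')] at hpow
  refine hpow.congr fun i => ?_
  rw [← Real.rpow_mul (norm_nonneg _), mul_inv_cancel₀ hp.ne', Real.rpow_one]

lemma norm_comp_equiv {β : Type*} {F : Type*} [NormedAddCommGroup F] (hp : 0 < p.toReal)
    (e : α ≃ β) {f : lp (fun _ : α => F) p} {g : lp (fun _ : β => F) p}
    (hfg : ∀ a, f a = g (e a)) : ‖f‖ = ‖g‖ := by
  rw [lp.norm_eq_tsum_rpow hp, lp.norm_eq_tsum_rpow hp, ← e.tsum_eq]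
  simp only [hfg]

lemma eq_single_of_apply_eq_zero [DecidableEq α] {f : lp E p} {i : α} (h : ∀ j ≠ i, f j = 0) :
    f = lp.single p i (f i) := by
  ext j
  by_cases hj : j = i
  · subst hj
    rw [lp.single_apply_self]
  · rw [lp.single_apply_ne p i _ hj, h j hj]

variable [Fact (1 ≤ p)]

lemma _root_.IsCompact.tendsto_norm_apply_zero (hp : p ≠ ∞) {K : Set (lp E p)} (hK : IsCompact K)
    {u : ℕ → lp E p} (hu : ∀ k, u k ∈ K) {x : ℕ → α} (hx : Tendsto x atTop cofinite) :
    Tendsto (fun k => ‖u k (x k)‖) atTop (𝓝 0) := by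
  have hp0 : p ≠ 0 := (zero_lt_one.trans_le (Fact.out : 1 ≤ p)).ne'
  refine tendsto_of_subseq_tendsto fun ns hns => ?_
  obtain ⟨L, -, ms, hms, hlim⟩ := hK.tendsto_subseq fun n => hu (ns n)
  refine ⟨ms, ?_⟩
  have hxL := (tendsto_norm_apply_cofinite_zero (ENNReal.toReal_pos hp0 hp) L).comp
    (hx.comp (hns.comp hms.tendsto_atTop))
  have hsum := (tendsto_iff_norm_sub_tendsto_zero.mp hlim).add hxL
  rw [add_zero] at hsum
  refine squeeze_zero (fun _ => norm_nonneg _) (fun n => ?_) hsum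
  set v := u (ns (ms n))
  set i := x (ns (ms n))
  calc ‖v i‖ = ‖(v - L) i + L i‖ := by rw [lp.coeFn_sub, Pi.sub_apply, sub_add_cancel]
    _ ≤ ‖v - L‖ + ‖L i‖ := (norm_add_le _ _).trans (by gcongr; exact norm_apply_le_norm hp0 _ _)

end lp

theorem apply_eq_zero_of_conj_invariant {Γ 𝕜 F : Type*} [Group Γ] [NontriviallyNormedField 𝕜]
    [ProperSpace 𝕜] [NormedAddCommGroup F] [NormedSpace 𝕜 F] {p : ℝ≥0∞} [Fact (1 ≤ p)]
    (hp : p ≠ ∞) {V : Submodule 𝕜 (lp (fun _ : Γ => F) p)} [FiniteDimensional 𝕜 V]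
    (hinv : ∀ g : Γ, ∀ f ∈ V, ∃ f' ∈ V, ∀ h : Γ, f h = f' (g⁻¹ * h * g))
    {γ : Γ} (hγ : (Set.range fun h : Γ => h * γ * h⁻¹).Infinite) {f : lp (fun _ : Γ => F) p}
    (hf : f ∈ V) : f γ = 0 := by
  have hp0 : 0 < p.toReal :=
    ENNReal.toReal_pos (zero_lt_one.trans_le (Fact.out : 1 ≤ p)).ne' hp
  obtain ⟨g, hg⟩ := hγ.exists_tendsto_cofinite_comp
  choose u huV hfu using fun k => hinv (g k)⁻¹ f hf
  have huγ : ∀ k, u k (g k * γ * (g k)⁻¹) = f γ := fun k => by simpa using (hfu k γ).symm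
  have hnorm : ∀ k, ‖u k‖ = ‖f‖ := fun k =>
    (lp.norm_comp_equiv hp0 (MulAut.conj (g k)).toEquiv fun a => by simpa using hfu k a).symm
  have : ProperSpace V := FiniteDimensional.proper 𝕜 V
  have hK : IsCompact ((↑) '' Metric.closedBall (0 : V) ‖f‖ : Set (lp (fun _ : Γ => F) p)) :=
    (isCompact_closedBall 0 _).image continuous_subtype_val
  have huK : ∀ k, u k ∈ (↑) '' Metric.closedBall (0 : V) ‖f‖ := fun k =>
    ⟨⟨u k, huV k⟩, by simp [hnorm k], rfl⟩
  have hlim := hK.tendsto_norm_apply_zero hp huK hg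
  simp only [Function.comp_apply, huγ] at hlim
  exact norm_eq_zero.mp (tendsto_nhds_unique tendsto_const_nhds hlim)

theorem icc_conjugation_weakly_mixing_general
    {Γ : Type*} [Group Γ] [DecidableEq Γ]
    (hicc : ∀ γ : Γ, γ ≠ 1 → (Set.range fun h : Γ => h * γ * h⁻¹).Infinite)
    (V : Submodule ℂ (lp (fun _ : Γ => ℂ) 2))
    (hfd : FiniteDimensional ℂ V)
    (hinv : ∀ g : Γ, ∀ f : lp (fun _ : Γ => ℂ) 2,
      f ∈ V ↔ ∃ f' ∈ V, ∀ h : Γ, f h = f' (g⁻¹ * h * g)) :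
    V ≤ Submodule.span ℂ {lp.single 2 (1 : Γ) (1 : ℂ)} := by
  intro f hf
  have hvanish : ∀ γ ≠ 1, f γ = 0 := fun γ hγ =>
    apply_eq_zero_of_conj_invariant ENNReal.ofNat_ne_top (fun g f hf => (hinv g f).mp hf)
      (hicc γ hγ) hf
  rw [Submodule.mem_span_singleton]
  refine ⟨f 1, ?_⟩
  rw [← lp.single_smul, smul_eq_mul, mul_one]
  exact (lp.eq_single_of_apply_eq_zero hvanish).symm

/-- Weak mixing of the conjugation action of an i.c.c. group: if `Γ` is a countable
group all of whose nontrivial conjugacy classes are infinite, then every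
finite-dimensional subspace `V` of `ℓ²(Γ, ℂ)` that is invariant under the conjugation
representation `(π(g) f)(h) = f(g⁻¹ h g)` (i.e. `π(g) V = V` for all `g`) is contained
in the span of `δ_e`. -/
theorem icc_conjugation_weakly_mixing
    {Γ : Type*} [Group Γ] [Countable Γ] [DecidableEq Γ]
    (hicc : ∀ γ : Γ, γ ≠ 1 → (Set.range fun h : Γ => h * γ * h⁻¹).Infinite)
    (V : Submodule ℂ (lp (fun _ : Γ => ℂ) 2))
    (hfd : FiniteDimensional ℂ V)
    (hinv : ∀ g : Γ, ∀ f : lp (fun _ : Γ => ℂ) 2,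
      f ∈ V ↔ ∃ f' ∈ V, ∀ h : Γ, f h = f' (g⁻¹ * h * g)) :
    V ≤ Submodule.span ℂ {lp.single 2 (1 : Γ) (1 : ℂ)} :=
  icc_conjugation_weakly_mixing_general hicc V hfd hinv
end

section
/- Let Γ be a countable group acting by measure-preserving transformations on a standard probability space (Ω, μ), and let c : Γ × Ω → ℂ be a measurable map with |c(g, ω)| = 1 for all g, ω, satisfying the cocycle identity c(gh, ω) = c(h, ω) · c(g, h·ω) for all g, h ∈ Γ and all ω ∈ Ω. Assume the fixed-point set {ω : g·ω = ω} is measurable for each g ∈ Γ. Define φ(ω)(g) = c(g, ω) if g·ω = ω and φ(ω)(g) = 0 otherwise. Then φ is an invariant random positive definite function: for almost every ω ∈ Ω the function φ(ω) : Γ → ℂ is a normalized positive definite function, and for all g, h ∈ Γ and almost every ω one has φ(h·ω)(g) = φ(ω)(h⁻¹ g h). -/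
open MeasureTheory
open scoped ComplexOrder

/-- A function `φ : Γ → ℂ` is positive definite if for every `n` and every tuple
`g : Fin n → Γ`, the matrix `[φ((g j)⁻¹ * g i)]` is positive semidefinite. -/
def IsPositiveDefinite {Γ : Type*} [Group Γ] (φ : Γ → ℂ) : Prop :=
  ∀ (n : ℕ) (g : Fin n → Γ), (Matrix.of fun i j : Fin n => φ ((g j)⁻¹ * g i)).PosSemidef

/-- A normalized positive definite function. -/
def IsNormalizedPositiveDefinite {Γ : Type*} [Group Γ] (φ : Γ → ℂ) : Prop :=
  IsPositiveDefinite φ ∧ φ 1 = 1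

/-!
If `a·ω = b·ω`, the cocycle identity and `|c| = 1` give `c(b⁻¹ a, ω) = c(a, ω) · conj c(b, ω)`.
So the matrix `[φ(ω)((g j)⁻¹ g i)]` has entries `[g i·ω = g j·ω] · w i · conj (w j)` with
`w i = c(g i, ω)`, which is `Aᴴ A` for `A t i = [g i·ω = t] · conj (w i)`, `t` ranging over
the points `g i·ω`. With `a = g h` and `b = h` the same identity gives `c(h⁻¹ g h, ω) = c(g, h·ω)`
whenever `h⁻¹ g h` fixes `ω`; the invariance therefore holds at every `ω`.
-/

open ComplexConjugate

theorem Matrix.posSemidef_of_ite_eq {ι X : Type*} [Fintype ι] [DecidableEq X]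
    (p : ι → X) (w : ι → ℂ) :
    (Matrix.of fun i j => if p i = p j then w i * conj (w j) else 0).PosSemidef := by
  let A : Matrix (Set.range p) ι ℂ := Matrix.of fun t i => if p i = t then conj (w i) else 0
  convert Matrix.posSemidef_conjTranspose_mul_self A using 1
  ext i j
  rw [Matrix.mul_apply, Finset.sum_eq_single ⟨p i, i, rfl⟩]
  · by_cases hij : p i = p j <;> simp [A, hij, eq_comm]
  · rintro ⟨t, _⟩ - ht
    have hti : p i ≠ t := fun h => ht (Subtype.ext h.symm)
    simp [A, hti]
  · simp

def IsUnimodular {G X : Type*} (c : G → X → ℂ) : Prop :=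
  ∀ (g : G) (x : X), ‖c g x‖ = 1

theorem IsUnimodular.mul_conj {G X : Type*} {c : G → X → ℂ} (hu : IsUnimodular c)
    (g : G) (x : X) : c g x * conj (c g x) = 1 := by
  rw [Complex.mul_conj', hu]
  norm_num

section Cocycle

variable {G X : Type*} [Group G] [MulAction G X]

def IsCocycle (c : G → X → ℂ) : Prop :=
  ∀ (g h : G) (x : X), c (g * h) x = c h x * c g (h • x)

theorem IsCocycle.apply_inv_mul_of_smul_eq {c : G → X → ℂ} (hc : IsCocycle c)
    (hu : IsUnimodular c) {a b : G} {x : X} (hab : a • x = b • x) :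
    c (b⁻¹ * a) x = c a x * conj (c b x) := by
  have hfix : (b⁻¹ * a) • x = x := by rw [mul_smul, hab, inv_smul_smul]
  have hca := hc b (b⁻¹ * a) x
  rw [mul_inv_cancel_left, hfix] at hca
  rw [hca, mul_assoc, hu.mul_conj, mul_one]

theorem IsCocycle.apply_one {c : G → X → ℂ} (hc : IsCocycle c) (hu : IsUnimodular c) (x : X) :
    c 1 x = 1 := by
  simpa [hu.mul_conj] using hc.apply_inv_mul_of_smul_eq hu (rfl : (1 : G) • x = (1 : G) • x)

theorem IsCocycle.apply_conj_of_smul_eq {c : G → X → ℂ} (hc : IsCocycle c)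
    (hu : IsUnimodular c) {g h : G} {x : X} (hfix : (g * h) • x = h • x) :
    c (h⁻¹ * g * h) x = c g (h • x) := by
  rw [mul_assoc, hc.apply_inv_mul_of_smul_eq hu hfix, hc, mul_comm (c h x), mul_assoc,
    hu.mul_conj, mul_one]

open Classical in
noncomputable def cocycleOnStabilizer (c : G → X → ℂ) (x : X) (g : G) : ℂ :=
  if g • x = x then c g x else 0

open Classical in
theorem cocycleOnStabilizer_inv_mul {c : G → X → ℂ} (hc : IsCocycle c) (hu : IsUnimodular c)
    (x : X) (a b : G) :
    cocycleOnStabilizer c x (b⁻¹ * a) = if a • x = b • x then c a x * conj (c b x) else 0 := by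
  have hfix_iff : (b⁻¹ * a) • x = x ↔ a • x = b • x := by rw [mul_smul, inv_smul_eq_iff]
  by_cases hab : a • x = b • x
  · simp [cocycleOnStabilizer, hab, hfix_iff.2 hab, hc.apply_inv_mul_of_smul_eq hu hab]
  · simp [cocycleOnStabilizer, hab, mt hfix_iff.1 hab]

theorem isNormalizedPositiveDefinite_cocycleOnStabilizer {c : G → X → ℂ} (hc : IsCocycle c)
    (hu : IsUnimodular c) (x : X) : IsNormalizedPositiveDefinite (cocycleOnStabilizer c x) := by
  classical
  refine ⟨fun n g => ?_, by simp [cocycleOnStabilizer, hc.apply_one hu]⟩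
  simp_rw [cocycleOnStabilizer_inv_mul hc hu]
  exact Matrix.posSemidef_of_ite_eq (fun i => g i • x) (fun i => c (g i) x)

theorem cocycleOnStabilizer_smul {c : G → X → ℂ} (hc : IsCocycle c) (hu : IsUnimodular c)
    (x : X) (g h : G) :
    cocycleOnStabilizer c (h • x) g = cocycleOnStabilizer c x (h⁻¹ * g * h) := by
  have hfix_iff : (h⁻¹ * g * h) • x = x ↔ (g * h) • x = h • x := by
    rw [mul_assoc, mul_smul, inv_smul_eq_iff]
  by_cases hgh : (g * h) • x = h • x
  · simp [cocycleOnStabilizer, ← mul_smul, hgh, hfix_iff.2 hgh,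
      hc.apply_conj_of_smul_eq hu hgh]
  · simp [cocycleOnStabilizer, ← mul_smul, hgh, mt hfix_iff.1 hgh]

theorem measurable_cocycleOnStabilizer_apply [MeasurableSpace X] {c : G → X → ℂ} {g : G}
    (hc : Measurable (c g)) (hfix : MeasurableSet {x : X | g • x = x}) :
    Measurable fun x => cocycleOnStabilizer c x g := by
  classical
  exact Measurable.ite hfix hc measurable_const

end Cocycle

theorem cocycle_on_stabilizer_is_irpdf_general
    {Γ Ω : Type*} [Group Γ]
    [MeasurableSpace Ω]
    (μ : Measure Ω)
    [MulAction Γ Ω]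
    (c : Γ → Ω → ℂ)
    (hcmeas : ∀ g : Γ, Measurable (c g))
    (hcmod : ∀ (g : Γ) (ω : Ω), ‖c g ω‖ = 1)
    (hcocycle : ∀ (g h : Γ) (ω : Ω), c (g * h) ω = c h ω * c g (h • ω))
    (hfix : ∀ g : Γ, MeasurableSet {ω : Ω | g • ω = ω})
    (φ : Ω → Γ → ℂ)
    (hφ_fix : ∀ (ω : Ω) (g : Γ), g • ω = ω → φ ω g = c g ω)
    (hφ_nfix : ∀ (ω : Ω) (g : Γ), g • ω ≠ ω → φ ω g = 0) :
    (∀ g : Γ, Measurable fun ω => φ ω g) ∧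
      (∀ᵐ ω ∂μ, IsNormalizedPositiveDefinite (φ ω)) ∧
      (∀ g h : Γ, ∀ᵐ ω ∂μ, φ (h • ω) g = φ ω (h⁻¹ * g * h)) := by
  have hφ : φ = cocycleOnStabilizer c := by
    ext ω g
    by_cases h : g • ω = ω
    · simp [cocycleOnStabilizer, h, hφ_fix ω g h]
    · simp [cocycleOnStabilizer, h, hφ_nfix ω g h]
  subst hφ
  exact ⟨fun g => measurable_cocycleOnStabilizer_apply (hcmeas g) (hfix g),
    .of_forall (isNormalizedPositiveDefinite_cocycleOnStabilizer hcocycle hcmod),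
    fun g h => .of_forall fun ω => cocycleOnStabilizer_smul hcocycle hcmod ω g h⟩

/-- Given a p.m.p. action of a countable group `Γ` on a standard probability space
`(Ω, μ)` and a unimodular cocycle `c : Γ × Ω → S¹`, the function
`φ(ω)(g) = c(g, ω)` if `g·ω = ω` and `0` otherwise is an invariant random positive
definite function. -/
theorem cocycle_on_stabilizer_is_irpdf
    {Γ Ω : Type*} [Group Γ] [Countable Γ]
    [MeasurableSpace Ω] [StandardBorelSpace Ω]
    (μ : Measure Ω) [IsProbabilityMeasure μ]
    [MulAction Γ Ω]
    (hmp : ∀ g : Γ, MeasurePreserving (fun ω => g • ω) μ μ)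
    (c : Γ → Ω → ℂ)
    (hcmeas : ∀ g : Γ, Measurable (c g))
    (hcmod : ∀ (g : Γ) (ω : Ω), ‖c g ω‖ = 1)
    (hcocycle : ∀ (g h : Γ) (ω : Ω), c (g * h) ω = c h ω * c g (h • ω))
    (hfix : ∀ g : Γ, MeasurableSet {ω : Ω | g • ω = ω})
    (φ : Ω → Γ → ℂ)
    (hφ_fix : ∀ (ω : Ω) (g : Γ), g • ω = ω → φ ω g = c g ω)
    (hφ_nfix : ∀ (ω : Ω) (g : Γ), g • ω ≠ ω → φ ω g = 0) :
    (∀ g : Γ, Measurable fun ω => φ ω g) ∧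
      (∀ᵐ ω ∂μ, IsNormalizedPositiveDefinite (φ ω)) ∧
      (∀ g h : Γ, ∀ᵐ ω ∂μ, φ (h • ω) g = φ ω (h⁻¹ * g * h)) :=
  cocycle_on_stabilizer_is_irpdf_general μ c hcmeas hcmod hcocycle hfix φ hφ_fix hφ_nfix
end

section
/- Let Γ be a countable group acting by measure-preserving transformations on a standard probability space (Ω, μ), and let φ be an invariant random positive definite function on Γ over this action. Then the function τ : Γ → ℂ defined by τ(γ) = ∫_Ω φ(ω)(γ) dμ(ω) is a character: τ is a normalized positive definite function on Γ and τ(h⁻¹ g h) = τ(g) for all g, h ∈ Γ. -/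
/-!
The matrix `[τ((g j)⁻¹ * g i)]` is the entrywise integral of the almost surely positive
semidefinite matrices `[φ(ω)((g j)⁻¹ * g i)]`; since the quadratic form `x ↦ x⋆ M x` is linear
in `M`, positive semidefiniteness survives integration, and integrability is automatic because
positive definite functions with `φ 1 = 1` are bounded by `1`. Conjugation invariance is the
change of variables `ω ↦ h • ω`, under which `μ` is invariant.
-/

open MeasureTheory
open scoped ComplexOrder

open scoped ComplexConjugate Matrix

lemma IsPositiveDefinite.apply_inv {Γ : Type*} [Group Γ] {φ : Γ → ℂ}
    (h : IsPositiveDefinite φ) (γ : Γ) : φ γ⁻¹ = conj (φ γ) := by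
  simpa [Matrix.conjTranspose_apply, eq_comm] using
    congrFun (congrFun (h 2 ![1, γ]).isHermitian 0) 1

lemma IsNormalizedPositiveDefinite.norm_le_one {Γ : Type*} [Group Γ] {φ : Γ → ℂ}
    (h : IsNormalizedPositiveDefinite φ) (γ : Γ) : ‖φ γ‖ ≤ 1 := by
  have hq := (h.1 2 ![1, γ]).dotProduct_mulVec_nonneg ![1, -φ γ]
  have hform : star ![1, -φ γ] ⬝ᵥ
      ((Matrix.of fun i j : Fin 2 => φ ((![1, γ] j)⁻¹ * ![1, γ] i)) *ᵥ ![1, -φ γ])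
      = ((1 - ‖φ γ‖ ^ 2 : ℝ) : ℂ) := by
    simp only [dotProduct, Matrix.mulVec, Fin.sum_univ_two, Pi.star_apply, RCLike.star_def,
      Matrix.of_apply, Matrix.cons_val_zero, Matrix.cons_val_one, Matrix.cons_val_fin_one,
      inv_one, one_mul, mul_one, mul_comm, neg_mul, mul_neg, h.2, h.1.apply_inv, map_one, map_neg,
      inv_mul_cancel, Complex.ofReal_sub, Complex.ofReal_one, Complex.ofReal_pow,
      ← Complex.mul_conj']
    ring
  rw [hform, Complex.zero_le_real] at hq
  nlinarith [norm_nonneg (φ γ)]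

theorem MeasureTheory.MeasurePreserving.integral_comp_of_aestronglyMeasurable
    {α β E : Type*} [MeasurableSpace α] [MeasurableSpace β] [NormedAddCommGroup E]
    [NormedSpace ℝ E] {μ : Measure α} {ν : Measure β} {f : α → β}
    (hf : MeasurePreserving f μ ν) {g : β → E} (hg : AEStronglyMeasurable g ν) :
    ∫ x, g (f x) ∂μ = ∫ y, g y ∂ν := by
  rw [← integral_map hf.measurable.aemeasurable (hf.map_eq ▸ hg), hf.map_eq]

section Integral

variable {Ω : Type*} [MeasurableSpace Ω] {μ : Measure Ω}

lemma Matrix.PosSemidef.integral {n : Type*} [Fintype n] {A : Ω → Matrix n n ℂ}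
    (hint : ∀ i j, Integrable (fun ω => A ω i j) μ) (hA : ∀ᵐ ω ∂μ, (A ω).PosSemidef) :
    (Matrix.of fun i j => ∫ ω, A ω i j ∂μ).PosSemidef := by
  refine .of_dotProduct_mulVec_nonneg ?_ fun x => ?_
  · ext i j
    simp only [Matrix.conjTranspose_apply, Matrix.of_apply, RCLike.star_def, ← integral_conj]
    refine integral_congr_ae ?_
    filter_upwards [hA] with ω hω
    exact congrFun (congrFun hω.isHermitian i) j
  · have hrow : ∀ i, Integrable (fun ω => ∑ j, A ω i j * x j) μ := fun i =>
      integrable_finsetSum _ fun j _ => (hint i j).mul_const _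
    have hform : star x ⬝ᵥ (Matrix.of (fun i j => ∫ ω, A ω i j ∂μ) *ᵥ x)
        = ∫ ω, star x ⬝ᵥ (A ω *ᵥ x) ∂μ := by
      simp only [dotProduct, Matrix.mulVec, Matrix.of_apply, Pi.star_apply]
      rw [integral_finsetSum _ fun i _ => (hrow i).const_mul _]
      refine Finset.sum_congr rfl fun i _ => ?_
      rw [integral_const_mul, integral_finsetSum _ fun j _ => (hint i j).mul_const _]
      simp only [integral_mul_const]
    rw [hform]
    refine integral_nonneg_of_ae ?_
    filter_upwards [hA] with ω hω
    exact hω.dotProduct_mulVec_nonneg x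

variable {Γ : Type*} [Group Γ] {φ : Ω → Γ → ℂ}

lemma IsPositiveDefinite.integral (hint : ∀ γ, Integrable (fun ω => φ ω γ) μ)
    (hφ : ∀ᵐ ω ∂μ, IsPositiveDefinite (φ ω)) :
    IsPositiveDefinite fun γ => ∫ ω, φ ω γ ∂μ := fun n g =>
  Matrix.PosSemidef.integral (fun _ _ => hint _) (hφ.mono fun _ hω => hω n g)

lemma IsNormalizedPositiveDefinite.integrable_apply [IsFiniteMeasure μ]
    (hmeas : ∀ γ, AEStronglyMeasurable (fun ω => φ ω γ) μ)
    (hφ : ∀ᵐ ω ∂μ, IsNormalizedPositiveDefinite (φ ω)) (γ : Γ) :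
    Integrable (fun ω => φ ω γ) μ :=
  .of_bound (hmeas γ) 1 (hφ.mono fun _ hω => hω.norm_le_one γ)

lemma IsNormalizedPositiveDefinite.integral [IsProbabilityMeasure μ]
    (hmeas : ∀ γ, AEStronglyMeasurable (fun ω => φ ω γ) μ)
    (hφ : ∀ᵐ ω ∂μ, IsNormalizedPositiveDefinite (φ ω)) :
    IsNormalizedPositiveDefinite fun γ => ∫ ω, φ ω γ ∂μ := by
  refine ⟨.integral (integrable_apply hmeas hφ) (hφ.mono fun _ hω => hω.1), ?_⟩
  show ∫ ω, φ ω 1 ∂μ = 1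
  rw [integral_congr_ae (hφ.mono fun _ hω => hω.2), integral_const, probReal_univ, one_smul]

lemma integral_apply_conj_eq_of_invariant [MulAction Γ Ω]
    (hmp : ∀ g : Γ, MeasurePreserving (fun ω => g • ω) μ μ)
    (hmeas : ∀ γ, AEStronglyMeasurable (fun ω => φ ω γ) μ)
    (hinv : ∀ g h : Γ, ∀ᵐ ω ∂μ, φ (g • ω) h = φ ω (g⁻¹ * h * g)) (g h : Γ) :
    ∫ ω, φ ω (h⁻¹ * g * h) ∂μ = ∫ ω, φ ω g ∂μ := by
  rw [← (hmp h).integral_comp_of_aestronglyMeasurable (hmeas g)]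
  exact integral_congr_ae ((hinv h g).mono fun _ hω => hω.symm)

end Integral

theorem expectation_of_irpdf_is_character_general
    {Γ Ω : Type*} [Group Γ]
    [MeasurableSpace Ω]
    (μ : Measure Ω) [IsProbabilityMeasure μ]
    [MulAction Γ Ω]
    (hmp : ∀ g : Γ, MeasurePreserving (fun ω => g • ω) μ μ)
    (φ : Ω → Γ → ℂ)
    (hmeas : ∀ γ : Γ, Measurable fun ω => φ ω γ)
    (hpd : ∀ᵐ ω ∂μ, IsNormalizedPositiveDefinite (φ ω))
    (hinv : ∀ g h : Γ, ∀ᵐ ω ∂μ, φ (g • ω) h = φ ω (g⁻¹ * h * g)) :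
    IsNormalizedPositiveDefinite (fun γ => ∫ ω, φ ω γ ∂μ) ∧
      ∀ g h : Γ, ∫ ω, φ ω (h⁻¹ * g * h) ∂μ = ∫ ω, φ ω g ∂μ :=
  have hmeas' γ := (hmeas γ).aestronglyMeasurable
  ⟨.integral hmeas' hpd, integral_apply_conj_eq_of_invariant hmp hmeas' hinv⟩

/-- The expectation of an invariant random positive definite function is a character:
`τ(γ) = ∫_Ω φ(ω)(γ) dμ(ω)` is a normalized positive definite function which is
invariant under conjugation. -/
theorem expectation_of_irpdf_is_character
    {Γ Ω : Type*} [Group Γ] [Countable Γ]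
    [MeasurableSpace Ω] [StandardBorelSpace Ω]
    (μ : Measure Ω) [IsProbabilityMeasure μ]
    [MulAction Γ Ω]
    (hmp : ∀ g : Γ, MeasurePreserving (fun ω => g • ω) μ μ)
    (φ : Ω → Γ → ℂ)
    (hmeas : ∀ γ : Γ, Measurable fun ω => φ ω γ)
    (hpd : ∀ᵐ ω ∂μ, IsNormalizedPositiveDefinite (φ ω))
    (hinv : ∀ g h : Γ, ∀ᵐ ω ∂μ, φ (g • ω) h = φ ω (g⁻¹ * h * g)) :
    IsNormalizedPositiveDefinite (fun γ => ∫ ω, φ ω γ ∂μ) ∧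
      ∀ g h : Γ, ∫ ω, φ ω (h⁻¹ * g * h) ∂μ = ∫ ω, φ ω g ∂μ :=
  expectation_of_irpdf_is_character_general μ hmp φ hmeas hpd hinv
end
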